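/- Let (u, ρ) be a smooth solution of the periodic two-component μ-Hunter-Saxton system on [0,∞). Then for every t ≥ 0 and every continuously differentiable 1-periodic function φ : ℝ → ℝ with ∫₀¹ (φ(y)² + φ′(y)²) dy ≤ 1, one has |∫₀¹ ρ_t(t,x) φ(x) dx| ≤ (|μ₀| + (√3/6) μ₁ + |γ|) μ₁. -/

import Mathlib

/-!
Integrating `ρₜ = (ρ (u + γ))ₓ` against `φ` by parts turns `∫ ρₜ φ` into `-∫ ρ (u + γ) φ'`, which
Cauchy–Schwarz bounds by `sup |u + γ| · ‖ρ(t)‖₂ · ‖φ'‖₂`. The mean `∫ u` and the energy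
`∫ (uₓ² + ρ²)` are conserved: by the equations, their time derivatives are integrals over a period
of exact `x`-derivatives of periodic functions. Hence `‖ρ(t)‖₂, ‖uₓ(t)‖₂ ≤ μ₁`, and the periodic
Sobolev bound `|f x - ∫ f| ≤ (√3/6) ‖f'‖₂` gives `|u + γ| ≤ |μ₀| + (√3/6) μ₁ + |γ|`.
-/

open MeasureTheory Real Set Filter Function intervalIntegral
open scoped ContDiff

section TwoVariables

variable {E : Type*} [NormedAddCommGroup E] [NormedSpace ℝ E]

theorem DifferentiableAt.hasDerivAt_snd {G : ℝ × ℝ → E} {t x : ℝ}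
    (hG : DifferentiableAt ℝ G (t, x)) :
    HasDerivAt (fun y => G (t, y)) (fderiv ℝ G (t, x) (0, 1)) x :=
  hG.hasFDerivAt.comp_hasDerivAt x ((hasDerivAt_const x t).prodMk (hasDerivAt_id x))

theorem DifferentiableAt.hasDerivAt_fst {G : ℝ × ℝ → E} {t x : ℝ}
    (hG : DifferentiableAt ℝ G (t, x)) :
    HasDerivAt (fun s => G (s, x)) (fderiv ℝ G (t, x) (1, 0)) t :=
  hG.hasFDerivAt.comp_hasDerivAt t ((hasDerivAt_id t).prodMk (hasDerivAt_const t x))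

variable {g : ℝ → ℝ → ℝ} {m n : WithTop ℕ∞}

theorem ContDiff.curry_fst (hg : ContDiff ℝ n (uncurry g)) (t : ℝ) : ContDiff ℝ n (g t) :=
  hg.comp (contDiff_prodMk_right t)

theorem ContDiff.curry_snd (hg : ContDiff ℝ n (uncurry g)) (x : ℝ) : ContDiff ℝ n (g · x) :=
  hg.comp (contDiff_prodMk_left x)

theorem ContDiff.uncurry_deriv_snd (hg : ContDiff ℝ n (uncurry g)) (hmn : m + 1 ≤ n) :
    ContDiff ℝ m (uncurry fun t x => deriv (g t) x) :=
  ContDiff.fderiv_apply (f := fun p y => g (Prod.fst p) y)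
    (hg.comp (contDiff_fst.fst.prodMk contDiff_snd)) contDiff_snd contDiff_const hmn

theorem ContDiff.uncurry_deriv_fst (hg : ContDiff ℝ n (uncurry g)) (hmn : m + 1 ≤ n) :
    ContDiff ℝ m (uncurry fun t x => deriv (g · x) t) :=
  ContDiff.fderiv_apply (f := fun p s => g s (Prod.snd p))
    (hg.comp (contDiff_snd.prodMk contDiff_fst.snd)) contDiff_fst contDiff_const hmn

theorem deriv_deriv_comm_of_contDiff (hg : ContDiff ℝ 2 (uncurry g)) (t x : ℝ) :
    deriv (fun y => deriv (g · y) t) x = deriv (fun s => deriv (g s) x) t := by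
  have hdiff : Differentiable ℝ (uncurry g) := hg.differentiable (by norm_num)
  have hd2 : Differentiable ℝ (fderiv ℝ (uncurry g)) :=
    (hg.fderiv_right (m := 1) (by norm_num)).differentiable one_ne_zero
  have h1 : (fun y => deriv (g · y) t) = fun y => fderiv ℝ (uncurry g) (t, y) (1, 0) :=
    funext fun y => (hdiff (t, y)).hasDerivAt_fst.deriv
  have h2 : (fun s => deriv (g s) x) = fun s => fderiv ℝ (uncurry g) (s, x) (0, 1) :=
    funext fun s => (hdiff (s, x)).hasDerivAt_snd.deriv
  rw [h1, h2, ((hd2 (t, x)).hasDerivAt_snd.clm_apply (hasDerivAt_const x _)).deriv,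
    ((hd2 (t, x)).hasDerivAt_fst.clm_apply (hasDerivAt_const t _)).deriv]
  simpa using (hg.contDiffAt.isSymmSndFDerivAt (by simp)) (0, 1) (1, 0)

theorem ContDiff.hasDerivAt_curry_fst (hg : ContDiff ℝ n (uncurry g)) (hn : n ≠ 0) (t x : ℝ) :
    HasDerivAt (g t) (deriv (g t) x) x :=
  ((hg.curry_fst t).differentiable hn x).hasDerivAt

theorem ContDiff.hasDerivAt_curry_snd (hg : ContDiff ℝ n (uncurry g)) (hn : n ≠ 0) (t x : ℝ) :
    HasDerivAt (g · x) (deriv (g · x) t) t :=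
  ((hg.curry_snd x).differentiable hn t).hasDerivAt

theorem hasDerivAt_intervalIntegral_of_contDiff {f : ℝ → ℝ → ℝ} (hf : ContDiff ℝ 1 (uncurry f))
    (a b t : ℝ) :
    HasDerivAt (fun s => ∫ y in a..b, f s y) (∫ y in a..b, deriv (f · y) t) t := by
  have hf' : Continuous (uncurry fun s y => deriv (f · y) s) :=
    (hf.uncurry_deriv_fst (m := 0) le_rfl).continuous
  obtain ⟨C, hC⟩ := ((isCompact_closedBall t 1).prod (isCompact_uIcc (a := a) (b := b)))
    |>.exists_bound_of_continuousOn hf'.continuousOn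
  refine (hasDerivAt_integral_of_dominated_loc_of_deriv_le (bound := fun _ => C)
    (Metric.closedBall_mem_nhds t one_pos)
    (Eventually.of_forall fun s =>
      (hf.continuous.comp (Continuous.prodMk_right s)).aestronglyMeasurable)
    ((hf.continuous.comp (Continuous.prodMk_right t)).intervalIntegrable a b)
    (hf'.comp (Continuous.prodMk_right t)).aestronglyMeasurable
    (Eventually.of_forall fun y hy s hs => hC (s, y) ⟨hs, uIoc_subset_uIcc hy⟩)
    intervalIntegrable_const
    (Eventually.of_forall fun y _ s _ =>
      ((hf.differentiable one_ne_zero).comp (differentiable_id.prodMk (differentiable_const y))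
        s).hasDerivAt)).2

end TwoVariables

theorem eq_of_forall_hasDerivAt_zero {E : Type*} [NormedAddCommGroup E] [NormedSpace ℝ E]
    {f : ℝ → E} {a b : ℝ} (hab : a ≤ b) (hf : ∀ s ∈ Icc a b, HasDerivAt f 0 s) : f b = f a :=
  constant_of_has_deriv_right_zero (fun s hs => (hf s hs).continuousAt.continuousWithinAt)
    (fun s hs => (hf s (Ico_subset_Icc_self hs)).hasDerivWithinAt) b ⟨hab, le_rfl⟩

theorem sq_intervalIntegral_mul_le {f g : ℝ → ℝ} {a b : ℝ} (hab : a ≤ b) (hf : Continuous f)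
    (hg : Continuous g) :
    (∫ y in a..b, f y * g y) ^ 2 ≤ (∫ y in a..b, f y ^ 2) * ∫ y in a..b, g y ^ 2 := by
  have hquad : ∀ s : ℝ, 0 ≤ (∫ y in a..b, g y ^ 2) * (s * s) + 2 * (∫ y in a..b, f y * g y) * s
      + ∫ y in a..b, f y ^ 2 := fun s => by
    have hexp : ∫ y in a..b, (f y + s * g y) ^ 2 = (∫ y in a..b, g y ^ 2) * (s * s)
        + 2 * (∫ y in a..b, f y * g y) * s + ∫ y in a..b, f y ^ 2 := by
      have hpt : ∀ y, (f y + s * g y) ^ 2 = s * s * g y ^ 2 + 2 * s * (f y * g y) + f y ^ 2 :=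
        fun y => by ring
      simp_rw [hpt]
      rw [intervalIntegral.integral_add, intervalIntegral.integral_add,
        intervalIntegral.integral_const_mul, intervalIntegral.integral_const_mul]
      · ring
      all_goals exact Continuous.intervalIntegrable (by fun_prop) _ _
    exact hexp ▸ integral_nonneg hab fun y _ => sq_nonneg _
  have hdisc := discrim_le_zero hquad
  rw [discrim] at hdisc
  linarith

theorem abs_intervalIntegral_mul_mul_le {f w g : ℝ → ℝ} {a b M : ℝ} (hab : a ≤ b)
    (hf : Continuous f) (hw : Continuous w) (hg : Continuous g) (hM : ∀ x, |w x| ≤ M) :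
    |∫ x in a..b, f x * w x * g x| ≤ M * √(∫ x in a..b, f x ^ 2) * √(∫ x in a..b, g x ^ 2) := by
  have hM0 : 0 ≤ M := (abs_nonneg _).trans (hM 0)
  have hfw : ∫ x in a..b, (f x * w x) ^ 2 ≤ M ^ 2 * ∫ x in a..b, f x ^ 2 := by
    rw [← intervalIntegral.integral_const_mul]
    refine integral_mono_on hab (Continuous.intervalIntegrable (by fun_prop) _ _)
      (Continuous.intervalIntegrable (by fun_prop) _ _) fun x _ => ?_
    rw [mul_pow, mul_comm (M ^ 2)]
    exact mul_le_mul_of_nonneg_left (sq_le_sq.2 ((hM x).trans_eq (abs_of_nonneg hM0).symm))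
      (sq_nonneg _)
  calc |∫ x in a..b, f x * w x * g x|
      ≤ √((∫ x in a..b, (f x * w x) ^ 2) * ∫ x in a..b, g x ^ 2) :=
        abs_le_sqrt (sq_intervalIntegral_mul_le hab (hf.mul hw) hg)
    _ ≤ √(M ^ 2 * (∫ x in a..b, f x ^ 2) * ∫ x in a..b, g x ^ 2) :=
        sqrt_le_sqrt (mul_le_mul_of_nonneg_right hfw (integral_nonneg hab fun _ _ => sq_nonneg _))
    _ = M * √(∫ x in a..b, f x ^ 2) * √(∫ x in a..b, g x ^ 2) := by
        rw [sqrt_mul' _ (integral_nonneg hab fun _ _ => sq_nonneg _),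
          sqrt_mul' _ (integral_nonneg hab fun _ _ => sq_nonneg _), sqrt_sq hM0]

theorem sq_integral_sub_mul_le {g : ℝ → ℝ} (hg : Continuous g) {a b : ℝ} (hab : a ≤ b) (p : ℝ) :
    (∫ y in a..b, (y - p) * g y) ^ 2 ≤ ((b - p) ^ 3 - (a - p) ^ 3) / 3 * ∫ y in a..b, g y ^ 2 := by
  have hkernel : ∫ y in a..b, (y - p) ^ 2 = ((b - p) ^ 3 - (a - p) ^ 3) / 3 := by
    rw [intervalIntegral.integral_comp_sub_right (· ^ 2), integral_pow]
    ring
  exact hkernel ▸ sq_intervalIntegral_mul_le hab (by fun_prop) hg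

theorem Function.Periodic.periodic_deriv {f : ℝ → ℝ} {c : ℝ} (hf : Periodic f c) :
    Periodic (deriv f) c := fun x => by
  rw [← deriv_comp_add_const, hf.funext]

theorem Function.Periodic.intervalIntegral_eq_zero_of_hasDerivAt {F f : ℝ → ℝ} {c : ℝ}
    (hF : Periodic F c) (hderiv : ∀ x, HasDerivAt F (f x) x)
    (hf : IntervalIntegrable f volume 0 c) :
    ∫ x in 0..c, f x = 0 := by
  rw [integral_eq_sub_of_hasDerivAt (fun x _ => hderiv x) hf, ← zero_add c, hF, sub_self]

theorem integral_sub_mul_deriv {f : ℝ → ℝ} (hf : ContDiff ℝ 1 f) (a b p : ℝ) :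
    ∫ y in a..b, (y - p) * deriv f y = (b - p) * f b - (a - p) * f a - ∫ y in a..b, f y := by
  simpa using integral_mul_deriv_eq_deriv_mul (fun y _ => (hasDerivAt_id y).sub_const p)
    (fun y _ => (hf.differentiable one_ne_zero y).hasDerivAt) intervalIntegrable_const
    ((hf.continuous_deriv le_rfl).intervalIntegrable a b)

theorem Function.Periodic.abs_sub_intervalIntegral_le {f : ℝ → ℝ} (hp : Periodic f 1)
    (hf : ContDiff ℝ 1 f) (x : ℝ) :
    |f x - ∫ y in 0..1, f y| ≤ √3 / 6 * √(∫ y in 0..1, deriv f y ^ 2) := by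
  have hf' : Continuous (deriv f) := hf.continuous_deriv le_rfl
  have hshift : ∀ {F : ℝ → ℝ}, Periodic F 1 → ∫ y in 0..1, F y = ∫ y in x - 1/2..x + 1/2, F y :=
    fun hF => by rw [show x + 1/2 = x - 1/2 + 1 by ring, ← hF.intervalIntegral_add_eq 0, zero_add]
  -- `f x` minus its mean over `[x - 1/2, x + 1/2]` is `∫ k f'` for the kernel `k y = y - (x - 1/2)`
  -- on `[x - 1/2, x]`, `k y = y - (x + 1/2)` on `[x, x + 1/2]`; Cauchy–Schwarz with `∫ k² = 1/12`
  set B₁ := ∫ y in x - 1/2..x, (y - (x - 1/2)) * deriv f y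
  set B₂ := ∫ y in x..x + 1/2, (y - (x + 1/2)) * deriv f y
  have hsplit : f x - ∫ y in 0..1, f y = B₁ + B₂ := by
    simp only [B₁, B₂, integral_sub_mul_deriv hf]
    rw [hshift hp,
      ← integral_add_adjacent_intervals (b := x) (hf.continuous.intervalIntegrable _ _)
        (hf.continuous.intervalIntegrable _ _)]
    ring
  set S₁ := ∫ y in x - 1/2..x, deriv f y ^ 2
  set S₂ := ∫ y in x..x + 1/2, deriv f y ^ 2
  have hB₁ : B₁ ^ 2 ≤ 1 / 24 * S₁ :=
    (sq_integral_sub_mul_le hf' (by linarith) _).trans_eq (by ring)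
  have hB₂ : B₂ ^ 2 ≤ 1 / 24 * S₂ :=
    (sq_integral_sub_mul_le hf' (by linarith) _).trans_eq (by ring)
  have hS : ∫ y in 0..1, deriv f y ^ 2 = S₁ + S₂ := by
    rw [hshift fun y => congrArg (· ^ 2) (hp.periodic_deriv y), integral_add_adjacent_intervals]
      <;> exact ((hf'.pow 2).intervalIntegrable _ _)
  have hconst : √3 / 6 = √(1 / 12) := by
    rw [show (1 : ℝ) / 12 = 3 / 6 ^ 2 by norm_num, sqrt_div' _ (by norm_num), sqrt_sq (by norm_num)]
  rw [hsplit, hS, hconst, ← sqrt_mul (by norm_num)]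
  exact abs_le_sqrt (by nlinarith [sq_nonneg (B₁ - B₂)])

structure IsMuHSSolution (γ : ℝ) (u ρ : ℝ → ℝ → ℝ) : Prop where
  contDiff_u : ContDiff ℝ ∞ (uncurry u)
  contDiff_ρ : ContDiff ℝ ∞ (uncurry ρ)
  periodic_u : ∀ t, Periodic (u t) 1
  periodic_ρ : ∀ t, Periodic (ρ t) 1
  eq_u : ∀ t x : ℝ, 0 ≤ t →
    deriv (fun s => ∫ y in (0:ℝ)..1, u s y) t - deriv (fun s => deriv (deriv (u s)) x) t
      = 2 * (∫ y in (0:ℝ)..1, u t y) * deriv (u t) x - 2 * deriv (u t) x * deriv (deriv (u t)) x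
        - u t x * deriv (deriv (deriv (u t))) x + ρ t x * deriv (ρ t) x
        - γ * deriv (deriv (deriv (u t))) x
  eq_ρ : ∀ t x : ℝ, 0 ≤ t →
    deriv (fun s => ρ s x) t = deriv (fun y => ρ t y * u t y) x + γ * deriv (ρ t) x

namespace IsMuHSSolution

variable {γ : ℝ} {u ρ : ℝ → ℝ → ℝ}

theorem contDiff_deriv_u (h : IsMuHSSolution γ u ρ) :
    ContDiff ℝ ∞ (uncurry fun t x => deriv (u t) x) :=
  h.contDiff_u.uncurry_deriv_snd (by simp)

theorem contDiff_deriv_deriv_u (h : IsMuHSSolution γ u ρ) :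
    ContDiff ℝ ∞ (uncurry fun t x => deriv (deriv (u t)) x) :=
  h.contDiff_deriv_u.uncurry_deriv_snd (by simp)

theorem hasDerivAt_u (h : IsMuHSSolution γ u ρ) (t x : ℝ) : HasDerivAt (u t) (deriv (u t) x) x :=
  h.contDiff_u.hasDerivAt_curry_fst (by simp) t x

theorem hasDerivAt_deriv_u (h : IsMuHSSolution γ u ρ) (t x : ℝ) :
    HasDerivAt (deriv (u t)) (deriv (deriv (u t)) x) x :=
  h.contDiff_deriv_u.hasDerivAt_curry_fst (by simp) t x

theorem hasDerivAt_deriv_deriv_u (h : IsMuHSSolution γ u ρ) (t x : ℝ) :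
    HasDerivAt (deriv (deriv (u t))) (deriv (deriv (deriv (u t))) x) x :=
  h.contDiff_deriv_deriv_u.hasDerivAt_curry_fst (by simp) t x

theorem hasDerivAt_ρ (h : IsMuHSSolution γ u ρ) (t x : ℝ) : HasDerivAt (ρ t) (deriv (ρ t) x) x :=
  h.contDiff_ρ.hasDerivAt_curry_fst (by simp) t x

theorem periodic_deriv_time_deriv_u (h : IsMuHSSolution γ u ρ) (t : ℝ) :
    Periodic (fun x => deriv (fun s => deriv (u s) x) t) 1 := fun x => by
  simp only [(h.periodic_u _).periodic_deriv x]

theorem hasDerivAt_deriv_time_deriv_u (h : IsMuHSSolution γ u ρ) (t x : ℝ) :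
    HasDerivAt (fun y => deriv (fun s => deriv (u s) y) t)
      (deriv (fun s => deriv (deriv (u s)) x) t) x := by
  have hv := (h.contDiff_deriv_u.uncurry_deriv_fst (m := ∞) (by simp)).hasDerivAt_curry_fst
    (by simp) t x
  rwa [deriv_deriv_comm_of_contDiff (contDiff_infty.1 h.contDiff_deriv_u 2)] at hv

theorem deriv_mean_eq_zero (h : IsMuHSSolution γ u ρ) {t : ℝ} (ht : 0 ≤ t) :
    deriv (fun s => ∫ y in (0:ℝ)..1, u s y) t = 0 := by
  set m := ∫ y in (0:ℝ)..1, u t y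
  have hu := h.hasDerivAt_u t
  have hux := h.hasDerivAt_deriv_u t
  have huxx := h.hasDerivAt_deriv_deriv_u t
  have hρ := h.hasDerivAt_ρ t
  -- as `∂ₓ(∂ₜuₓ) = ∂ₜuₓₓ`, the first equation says `∂ₜ∫u` is the `x`-derivative of the periodic `F`
  set F : ℝ → ℝ := fun x => deriv (fun s => deriv (u s) x) t + 2 * m * u t x + ρ t x ^ 2 / 2
    - γ * deriv (deriv (u t)) x - u t x * deriv (deriv (u t)) x - deriv (u t) x ^ 2 / 2
  have hF : ∀ x, HasDerivAt F (deriv (fun s => ∫ y in (0:ℝ)..1, u s y) t) x := fun x => by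
    refine ((((((h.hasDerivAt_deriv_time_deriv_u t x).add ((hu x).const_mul (2 * m))).add
      (((hρ x).pow 2).div_const 2)).sub ((huxx x).const_mul γ)).sub ((hu x).mul (huxx x))).sub
      (((hux x).pow 2).div_const 2)).congr_deriv ?_
    linear_combination (h.eq_u t x ht).symm
  have hper : Periodic F 1 := fun x => by
    simp only [F, h.periodic_u t x, h.periodic_ρ t x, (h.periodic_u t).periodic_deriv x,
      (h.periodic_u t).periodic_deriv.periodic_deriv x, h.periodic_deriv_time_deriv_u t x]
  simpa using hper.intervalIntegral_eq_zero_of_hasDerivAt hF intervalIntegrable_const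

theorem mean_eq (h : IsMuHSSolution γ u ρ) {t : ℝ} (ht : 0 ≤ t) :
    ∫ y in (0:ℝ)..1, u t y = ∫ y in (0:ℝ)..1, u 0 y :=
  eq_of_forall_hasDerivAt_zero (f := fun s => ∫ y in (0:ℝ)..1, u s y) ht fun s hs => by
    have hm := (hasDerivAt_intervalIntegral_of_contDiff (h.contDiff_u.of_le (by simp)) 0 1 s)
      |>.differentiableAt.hasDerivAt
    rwa [h.deriv_mean_eq_zero hs.1] at hm

theorem hasDerivAt_energy (h : IsMuHSSolution γ u ρ) {t : ℝ} (ht : 0 ≤ t) :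
    HasDerivAt (fun s => ∫ y in (0:ℝ)..1, (deriv (u s) y ^ 2 + ρ s y ^ 2)) 0 t := by
  have hsmooth : ContDiff ℝ ∞ (uncurry fun s y => deriv (u s) y ^ 2 + ρ s y ^ 2) :=
    (h.contDiff_deriv_u.pow 2).add (h.contDiff_ρ.pow 2)
  convert hasDerivAt_intervalIntegral_of_contDiff (hsmooth.of_le (by simp)) 0 1 t using 1
  set m := ∫ y in (0:ℝ)..1, u t y
  set v : ℝ → ℝ := fun x => deriv (fun s => deriv (u s) x) t
  have hu := h.hasDerivAt_u t
  have hux := h.hasDerivAt_deriv_u t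
  have huxx := h.hasDerivAt_deriv_deriv_u t
  have hρ := h.hasDerivAt_ρ t
  have hv := h.hasDerivAt_deriv_time_deriv_u t
  have hmean := h.deriv_mean_eq_zero ht
  -- by both equations, the time derivative of the energy density is the `x`-derivative of the
  -- periodic `H`
  set H : ℝ → ℝ := fun x => 2 * u t x * v x + 2 * m * u t x ^ 2
    - 2 * u t x ^ 2 * deriv (deriv (u t)) x + 2 * ρ t x ^ 2 * u t x + γ * ρ t x ^ 2
    - 2 * γ * (u t x * deriv (deriv (u t)) x) + γ * deriv (u t) x ^ 2
  have hH : ∀ x, HasDerivAt H (deriv (fun s => deriv (u s) x ^ 2 + ρ s x ^ 2) t) x := fun x => by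
    have hdensity : HasDerivAt (fun s => deriv (u s) x ^ 2 + ρ s x ^ 2) _ t :=
      ((h.contDiff_deriv_u.hasDerivAt_curry_snd (by simp) t x).pow 2).add
        ((h.contDiff_ρ.hasDerivAt_curry_snd (by simp) t x).pow 2)
    refine (((((((((hu x).const_mul 2).mul (hv x)).add (((hu x).pow 2).const_mul (2 * m))).sub
      ((((hu x).pow 2).const_mul 2).mul (huxx x))).add
      ((((hρ x).pow 2).const_mul 2).mul (hu x))).add (((hρ x).pow 2).const_mul γ)).sub
      (((hu x).mul (huxx x)).const_mul (2 * γ))).add (((hux x).pow 2).const_mul γ)).congr_deriv ?_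
    rw [hdensity.deriv, h.eq_ρ t x ht,
      HasDerivAt.deriv (f := fun y => ρ t y * u t y) ((hρ x).mul (hu x))]
    simp only [Pi.pow_apply]
    linear_combination (2 * u t x) * hmean - (2 * u t x) * h.eq_u t x ht
  have hper : Periodic H 1 := fun x => by
    simp only [H, v, h.periodic_u t x, h.periodic_ρ t x, (h.periodic_u t).periodic_deriv x,
      (h.periodic_u t).periodic_deriv.periodic_deriv x, h.periodic_deriv_time_deriv_u t x]
  have hdensity_t : Continuous fun x => deriv (fun s => deriv (u s) x ^ 2 + ρ s x ^ 2) t :=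
    ((hsmooth.uncurry_deriv_fst (m := 0) (by simp)).curry_fst t).continuous
  exact (hper.intervalIntegral_eq_zero_of_hasDerivAt hH (hdensity_t.intervalIntegrable _ _)).symm

theorem energy_eq (h : IsMuHSSolution γ u ρ) {t : ℝ} (ht : 0 ≤ t) :
    ∫ y in (0:ℝ)..1, (deriv (u t) y ^ 2 + ρ t y ^ 2)
      = ∫ y in (0:ℝ)..1, (deriv (u 0) y ^ 2 + ρ 0 y ^ 2) :=
  eq_of_forall_hasDerivAt_zero (f := fun s => ∫ y in (0:ℝ)..1, (deriv (u s) y ^ 2 + ρ s y ^ 2)) ht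
    fun _ hs => h.hasDerivAt_energy hs.1

theorem abs_sub_mean_le (h : IsMuHSSolution γ u ρ) {t : ℝ} (ht : 0 ≤ t) (x : ℝ) :
    |u t x - ∫ y in (0:ℝ)..1, u 0 y|
      ≤ √3 / 6 * √(∫ y in (0:ℝ)..1, (deriv (u 0) y ^ 2 + ρ 0 y ^ 2)) := by
  have hu_t : ContDiff ℝ 1 (u t) := (h.contDiff_u.curry_fst t).of_le (by simp)
  have hux_t : Continuous (deriv (u t)) := hu_t.continuous_deriv le_rfl
  have hρ_t : Continuous (ρ t) := (h.contDiff_ρ.curry_fst t).continuous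
  rw [← h.mean_eq ht, ← h.energy_eq ht]
  exact ((h.periodic_u t).abs_sub_intervalIntegral_le hu_t x).trans <| by
    gcongr
    exact integral_mono_on zero_le_one (Continuous.intervalIntegrable (by fun_prop) _ _)
      (Continuous.intervalIntegrable (by fun_prop) _ _) fun y _ =>
        le_add_of_nonneg_right (sq_nonneg (ρ t y))

theorem sqrt_integral_sq_ρ_le (h : IsMuHSSolution γ u ρ) {t : ℝ} (ht : 0 ≤ t) :
    √(∫ y in (0:ℝ)..1, ρ t y ^ 2) ≤ √(∫ y in (0:ℝ)..1, (deriv (u 0) y ^ 2 + ρ 0 y ^ 2)) := by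
  have hux_t : Continuous (deriv (u t)) := (h.contDiff_deriv_u.curry_fst t).continuous
  have hρ_t : Continuous (ρ t) := (h.contDiff_ρ.curry_fst t).continuous
  rw [← h.energy_eq ht]
  gcongr
  exact integral_mono_on zero_le_one (Continuous.intervalIntegrable (by fun_prop) _ _)
    (Continuous.intervalIntegrable (by fun_prop) _ _) fun y _ => le_add_of_nonneg_left (sq_nonneg _)

theorem integral_deriv_time_ρ_mul (h : IsMuHSSolution γ u ρ) {t : ℝ} (ht : 0 ≤ t) {φ : ℝ → ℝ}
    (hφ : ContDiff ℝ 1 φ) (hφp : Periodic φ 1) :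
    ∫ x in (0:ℝ)..1, deriv (fun s => ρ s x) t * φ x
      = -∫ x in (0:ℝ)..1, ρ t x * (u t x + γ) * deriv φ x := by
  have hu := h.hasDerivAt_u t
  have hρ := h.hasDerivAt_ρ t
  have hP : ∀ x, HasDerivAt (fun x => ρ t x * (u t x + γ) * φ x)
      (deriv (fun s => ρ s x) t * φ x + ρ t x * (u t x + γ) * deriv φ x) x := fun x => by
    refine (((hρ x).mul ((hu x).add_const γ)).mul (hφ.differentiable one_ne_zero x).hasDerivAt)
      |>.congr_deriv ?_
    rw [h.eq_ρ t x ht, HasDerivAt.deriv (f := fun y => ρ t y * u t y) ((hρ x).mul (hu x))]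
    simp only [Pi.mul_apply]
    ring
  have hper : Periodic (fun x => ρ t x * (u t x + γ) * φ x) 1 := fun x => by
    simp only [h.periodic_u t x, h.periodic_ρ t x, hφp x]
  have hρ_t : Continuous fun x => deriv (fun s => ρ s x) t :=
    ((h.contDiff_ρ.uncurry_deriv_fst (m := 0) (by simp)).curry_fst t).continuous
  have hu_t : Continuous (u t) := (h.contDiff_u.curry_fst t).continuous
  have hρ_t' : Continuous (ρ t) := (h.contDiff_ρ.curry_fst t).continuous
  have hφ' : Continuous (deriv φ) := hφ.continuous_deriv le_rfl
  have hzero := hper.intervalIntegral_eq_zero_of_hasDerivAt hP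
    (Continuous.intervalIntegrable (by fun_prop) _ _)
  rw [intervalIntegral.integral_add (Continuous.intervalIntegrable (by fun_prop) _ _)
    (Continuous.intervalIntegrable (by fun_prop) _ _)] at hzero
  linarith

end IsMuHSSolution

theorem stmt_15
    (γ : ℝ) (u ρ : ℝ → ℝ → ℝ) (μ₀ μ₁ : ℝ)
    (hu : ContDiff ℝ (⊤ : ℕ∞) (Function.uncurry u))
    (hρ : ContDiff ℝ (⊤ : ℕ∞) (Function.uncurry ρ))
    (huper : ∀ t x : ℝ, u t (x + 1) = u t x)
    (hρper : ∀ t x : ℝ, ρ t (x + 1) = ρ t x)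
    (heq1 : ∀ t x : ℝ, 0 ≤ t →
      deriv (fun s => ∫ y in (0:ℝ)..1, u s y) t
        - deriv (fun s => deriv (deriv (u s)) x) t
      = 2 * (∫ y in (0:ℝ)..1, u t y) * deriv (u t) x
        - 2 * deriv (u t) x * deriv (deriv (u t)) x
        - u t x * deriv (deriv (deriv (u t))) x
        + ρ t x * deriv (ρ t) x
        - γ * deriv (deriv (deriv (u t))) x)
    (heq2 : ∀ t x : ℝ, 0 ≤ t →
      deriv (fun s => ρ s x) t
      = deriv (fun y => ρ t y * u t y) x + γ * deriv (ρ t) x)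
    (hμ₀ : μ₀ = ∫ y in (0:ℝ)..1, u 0 y)
    (hμ₁ : μ₁ = Real.sqrt (∫ y in (0:ℝ)..1, ((deriv (u 0) y) ^ 2 + (ρ 0 y) ^ 2)))
    : ∀ t : ℝ, 0 ≤ t → ∀ φ : ℝ → ℝ, ContDiff ℝ 1 φ → (∀ x, φ (x + 1) = φ x) →
      (∫ y in (0:ℝ)..1, ((φ y) ^ 2 + (deriv φ y) ^ 2)) ≤ 1 →
      |∫ x in (0:ℝ)..1, deriv (fun s => ρ s x) t * φ x| ≤ (|μ₀| + Real.sqrt 3 / 6 * μ₁ + |γ|) * μ₁ := by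
  intro t ht φ hφ hφper hφnorm
  have h : IsMuHSSolution γ u ρ := ⟨hu, hρ, huper, hρper, heq1, heq2⟩
  have hφ' : Continuous (deriv φ) := hφ.continuous_deriv le_rfl
  have hsup : ∀ x, |u t x + γ| ≤ |μ₀| + √3 / 6 * μ₁ + |γ| := fun x => by
    have hosc := h.abs_sub_mean_le ht x
    rw [← hμ₀, ← hμ₁] at hosc
    calc |u t x + γ| ≤ |u t x - μ₀| + |μ₀| + |γ| := by
          simpa using abs_add_three (u t x - μ₀) μ₀ γ
      _ ≤ |μ₀| + √3 / 6 * μ₁ + |γ| := by linarith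
  have hρ_L2 : √(∫ x in (0:ℝ)..1, ρ t x ^ 2) ≤ μ₁ := hμ₁ ▸ h.sqrt_integral_sq_ρ_le ht
  have hφ_L2 : √(∫ x in (0:ℝ)..1, deriv φ x ^ 2) ≤ 1 := by
    refine sqrt_le_one.2 (le_trans (integral_mono_on zero_le_one ?_ ?_ fun y _ =>
      le_add_of_nonneg_left (sq_nonneg (φ y))) hφnorm)
    all_goals exact Continuous.intervalIntegrable (by fun_prop) _ _
  rw [h.integral_deriv_time_ρ_mul ht hφ hφper, abs_neg]
  calc _ ≤ (|μ₀| + √3 / 6 * μ₁ + |γ|) * √(∫ x in (0:ℝ)..1, ρ t x ^ 2)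
        * √(∫ x in (0:ℝ)..1, deriv φ x ^ 2) :=
      abs_intervalIntegral_mul_mul_le zero_le_one (hρ.curry_fst t).continuous
        ((hu.curry_fst t).continuous.add continuous_const) hφ' hsup
    _ ≤ (|μ₀| + √3 / 6 * μ₁ + |γ|) * μ₁ * 1 := by
      have := (abs_nonneg _).trans (hsup 0)
      have := (sqrt_nonneg _).trans hρ_L2
      gcongr
    _ = (|μ₀| + √3 / 6 * μ₁ + |γ|) * μ₁ := mul_one _
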